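/- arXiv:math/0701495 — 4 statements merged into one kernel-verified Lean document; each statement's English description precedes it below -/
import Mathlib

section
/- Let L = FG be a factorizable group with induced F-action ◁ on G. Suppose x ∈ G has trivial stabilizer F_x = {a ∈ F : x ◁ a = x} = {1}. Then for every y in the orbit O_x, the set F_{y,y^{-1}} = {a ∈ F : y ◁ a = y^{-1}} has at most one element. -/
/- Setting: L = FG is a factorizable group (every element of L is uniquely a
product of an element of F and an element of G), with the induced matched-pair
actions: for x ∈ G, a ∈ F, x·a = (x ▷ a)·(x ◁ a) with x ▷ a ∈ F, x ◁ a ∈ G. -/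

/-- If x ∈ G has trivial stabilizer in F, then for every y in the orbit O_x the
set F_{y,y⁻¹} = {a ∈ F : y ◁ a = y⁻¹} has at most one element. -/
theorem trivial_stabilizer_inverting_unique {L : Type*} [Group L] (F G : Subgroup L)
    (huniq : ∀ (a b : F) (x y : G), (a : L) * (x : L) = (b : L) * (y : L) → a = b ∧ x = y)
    (rhd : G → F → F) (lhd : G → F → G)
    (hfac : ∀ (x : G) (a : F), (x : L) * (a : L) = (rhd x a : L) * (lhd x a : L)) (x : G)
    (hstab : ∀ a : F, lhd x a = x → a = 1) :
    ∀ y : G, (∃ c : F, lhd x c = y) →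
      ∀ a b : F, lhd y a = y⁻¹ → lhd y b = y⁻¹ → a = b := by
  -- the action fixes 1
  have hone : ∀ z : G, lhd z 1 = z := by
    intro z
    have h := hfac z 1
    have h' : ((1 : F) : L) * (z : L) = (rhd z 1 : L) * (lhd z 1 : L) := by
      rw [← h]; push_cast; group
    exact ((huniq 1 (rhd z 1) z (lhd z 1) h').2).symm
  -- the action is a right action
  have hmul : ∀ (z : G) (a b : F), lhd z (a * b) = lhd (lhd z a) b := by
    intro z a b
    have h1 := hfac z (a * b)
    have h2 := hfac z a
    have h3 := hfac (lhd z a) b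
    have key : ((rhd z (a * b) : F) : L) * (lhd z (a * b) : L)
        = ((rhd z a * rhd (lhd z a) b : F) : L) * (lhd (lhd z a) b : L) := by
      push_cast
      rw [← h1]
      push_cast
      rw [mul_assoc, ← mul_assoc (z : L), h2, mul_assoc, h3]
    exact (huniq _ _ _ _ key).2
  -- trivial stabilizer means the action of F on the orbit of x is free
  have hinj : ∀ d e : F, lhd x d = lhd x e → d = e := by
    intro d e h
    have h1 : lhd x (d * e⁻¹) = x := by
      rw [hmul, h, ← hmul, mul_inv_cancel, hone]
    have := hstab _ h1
    rwa [mul_inv_eq_one] at this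
  intro y hy a b ha hb
  obtain ⟨c, hc⟩ := hy
  have h1 : lhd x (c * a) = lhd x (c * b) := by
    rw [hmul, hmul, hc, ha, hb]
  have := hinj _ _ h1
  exact mul_left_cancel this
end

section
/- For the factorization S_n = C_n · S_{n-1} with induced action of S_{n-1} on C_n (defined by z^r · a = (z^r ▷ a)(z^r ◁ a), where z = (1,...,n), a ∈ S_{n-1}, z^r ▷ a ∈ S_{n-1}, z^r ◁ a ∈ C_n), there are exactly two orbits for the action ◁ of S_{n-1} on C_n: the singleton {1} and the set {z^r : 1 ≤ r ≤ n-1}. -/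
/-!
A factorisation `x * a = b * (x ◁ a)` with `a, b ∈ H` and `x, x ◁ a ∈ K` says exactly that
`x ◁ a` is a point of the right coset `H * x * a` lying in `K`; when `K ∩ H = 1` that point
is unique, so `x ◁ a = y ↔ x * a * y⁻¹ ∈ H`. For `H` the stabiliser of a point `p` in
`Perm α`, this reads `a (y⁻¹ p) = x⁻¹ p`. Since `C_n ∩ S_{n-1} = 1`, the points `y⁻¹ p`
with `y ≠ 1` all differ from `p`, and `S_{n-1}` moves any such point to any other by a
transposition.
-/

open Subgroup MulAction Equiv

namespace Subgroup

variable {G : Type*} [Group G] {H K : Subgroup G}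

theorem eq_of_mul_inv_mem_of_disjoint (hKH : Disjoint K H) {g : G} {c d : K}
    (hc : g * (c : G)⁻¹ ∈ H) (hd : g * (d : G)⁻¹ ∈ H) : c = d := by
  have hcd : (c : G) * (d : G)⁻¹ ∈ H := by
    simpa [mul_assoc] using H.mul_mem (H.inv_mem hc) hd
  exact Subtype.ext <| mul_inv_eq_one.1 <|
    disjoint_def.1 hKH (K.mul_mem c.2 (K.inv_mem d.2)) hcd

variable (lhd : K → H → K)

theorem lhd_eq_iff (hKH : Disjoint K H)
    (hfac : ∀ (x : K) (a : H), (x : G) * a * (lhd x a : G)⁻¹ ∈ H)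
    {x : K} {a : H} {y : K} : lhd x a = y ↔ (x : G) * a * (y : G)⁻¹ ∈ H :=
  ⟨fun h => h ▸ hfac x a, eq_of_mul_inv_mem_of_disjoint hKH (hfac x a)⟩

theorem lhd_eq_one_iff (hKH : Disjoint K H)
    (hfac : ∀ (x : K) (a : H), (x : G) * a * (lhd x a : G)⁻¹ ∈ H)
    {x : K} {a : H} : lhd x a = 1 ↔ x = 1 := by
  rw [lhd_eq_iff lhd hKH hfac, OneMemClass.coe_one, inv_one, mul_one, H.mul_mem_cancel_right a.2]
  exact ⟨fun hx => Subtype.ext (disjoint_def.1 hKH x.2 hx), fun hx => hx ▸ H.one_mem⟩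

end Subgroup

namespace Equiv.Perm

variable {α : Type*}

theorem IsCycle.disjoint_zpowers_stabilizer [Finite α] {σ : Perm α} (hσ : IsCycle σ) {p : α}
    (hp : σ p ≠ p) : _root_.Disjoint (zpowers σ) (stabilizer (Perm α) p) := by
  rw [disjoint_def]
  intro c hc hcp
  obtain ⟨k, rfl⟩ := mem_powers_iff_mem_zpowers.2 hc
  exact (hσ.pow_eq_one_iff' hp).2 hcp

theorem exists_mem_stabilizer_apply_eq [DecidableEq α] {p q r : α} (hq : q ≠ p) (hr : r ≠ p) :
    ∃ a ∈ stabilizer (Perm α) p, a q = r :=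
  ⟨swap q r, swap_apply_of_ne_of_ne hq.symm hr.symm, swap_apply_left q r⟩

theorem setOf_lhd_eq [DecidableEq α] {p : α} {K : Subgroup (Perm α)}
    (hK : _root_.Disjoint K (stabilizer (Perm α) p)) (lhd : K → stabilizer (Perm α) p → K)
    (hfac : ∀ (x : K) (a : stabilizer (Perm α) p),
      (x : Perm α) * a * (lhd x a : Perm α)⁻¹ ∈ stabilizer (Perm α) p)
    {x : K} (hx : x ≠ 1) : {y | ∃ a, lhd x a = y} = {y | y ≠ 1} := by
  have inv_apply_ne : ∀ c : K, c ≠ 1 → (c : Perm α)⁻¹ p ≠ p := fun c hc hcp =>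
    hc <| Subtype.ext <| disjoint_def.1 hK c.2 <| by
      simpa [mem_stabilizer_iff] using congrArg (c : Perm α) hcp.symm
  ext y
  refine ⟨fun ⟨a, hay⟩ hy => hx ((lhd_eq_one_iff lhd hK hfac).1 (hay.trans hy)),
    fun hy => ?_⟩
  obtain ⟨a, ha, hapy⟩ :=
    exists_mem_stabilizer_apply_eq (inv_apply_ne y hy) (inv_apply_ne x hx)
  refine ⟨⟨a, ha⟩, (lhd_eq_iff lhd hK hfac).2 ?_⟩
  rw [mem_stabilizer_iff, Perm.smul_def, Perm.mul_apply, Perm.mul_apply, hapy]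
  exact Equiv.apply_symm_apply _ p

end Equiv.Perm

/-- For the factorization S_{n+1} = C_{n+1} · S_n (with z = finRotate (n+1) the
standard (n+1)-cycle and S_n the stabilizer of the last point), the action ◁
of S_n on C_{n+1}, defined by x·a = (x ▷ a)·(x ◁ a) with x ▷ a ∈ S_n and
x ◁ a ∈ C_{n+1}, has exactly two orbits: {1} and C_{n+1} \ {1}. -/
theorem two_orbits_Cn (n : ℕ) (hn : 1 ≤ n)
    (rhd : Subgroup.zpowers (finRotate (n + 1)) →
      MulAction.stabilizer (Equiv.Perm (Fin (n + 1))) (Fin.last n) →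
      MulAction.stabilizer (Equiv.Perm (Fin (n + 1))) (Fin.last n))
    (lhd : Subgroup.zpowers (finRotate (n + 1)) →
      MulAction.stabilizer (Equiv.Perm (Fin (n + 1))) (Fin.last n) →
      Subgroup.zpowers (finRotate (n + 1)))
    (hfac : ∀ (x : Subgroup.zpowers (finRotate (n + 1)))
      (a : MulAction.stabilizer (Equiv.Perm (Fin (n + 1))) (Fin.last n)), (x : Equiv.Perm (Fin (n + 1))) * (a : Equiv.Perm (Fin (n + 1))) =
      (rhd x a : Equiv.Perm (Fin (n + 1))) * (lhd x a : Equiv.Perm (Fin (n + 1)))) :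
    (∀ a, lhd 1 a = 1) ∧
      {y | ∃ a, lhd ⟨finRotate (n + 1), Subgroup.mem_zpowers _⟩ a = y} =
        {y : Subgroup.zpowers (finRotate (n + 1)) | y ≠ 1} := by
  obtain ⟨m, rfl⟩ : ∃ m, n = m + 1 := ⟨n - 1, by omega⟩
  have hmove : finRotate (m + 2) (Fin.last (m + 1)) ≠ Fin.last (m + 1) := by
    rw [finRotate_last]
    exact (Fin.last_pos' (n := m + 1)).ne
  have hK := Perm.IsCycle.disjoint_zpowers_stabilizer isCycle_finRotate hmove
  have hfac' : ∀ (x : zpowers (finRotate (m + 2)))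
      (a : stabilizer (Perm (Fin (m + 2))) (Fin.last (m + 1))),
      (x : Perm (Fin (m + 2))) * a * (lhd x a : Perm (Fin (m + 2)))⁻¹ ∈
        stabilizer (Perm (Fin (m + 2))) (Fin.last (m + 1)) := fun x a => by
    rw [hfac, mul_inv_cancel_right]
    exact (rhd x a).2
  refine ⟨fun a => (lhd_eq_one_iff lhd hK hfac').2 rfl, Perm.setOf_lhd_eq hK lhd hfac' ?_⟩
  intro hz
  exact hmove (by rw [show finRotate (m + 2) = 1 from congrArg Subtype.val hz]; rfl)
end

section
/- For the factorization S_n = C_n · S_{n-1}, the stabilizer in S_{n-1} of the element z = (1,2,...,n) ∈ C_n under the action ◁ equals {a ∈ S_{n-1} : a(n-1) = n-1}, which is isomorphic to S_{n-2}. -/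
/-! Write `z * a = r * l` with `z = finRotate (n + 1)`. Evaluating at `q = n - 1` gives
`l q = r⁻¹ (z (a q))`, and since `r` fixes `z q = n`, this equals `z q` exactly when `a q = q`.
A power of the full cycle `z` is determined by its value at a single point, so `l = z` iff `a`
fixes `n - 1`. Permutations fixing the two points `n - 1` and `n` are the permutations of the
remaining `n - 1` points. -/

namespace Equiv.Perm

open MulAction Subgroup

variable {α : Type*}

theorem IsCycle.eq_of_mem_zpowers_of_apply_eq [Finite α] {c u v : Perm α} (hc : c.IsCycle)
    {x : α} (hx : c x ≠ x) (hu : u ∈ zpowers c) (hv : v ∈ zpowers c) (h : u x = v x) :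
    u = v := by
  obtain ⟨i, rfl⟩ := mem_powers_iff_mem_zpowers.mpr hu
  obtain ⟨j, rfl⟩ := mem_powers_iff_mem_zpowers.mpr hv
  exact hc.pow_eq_pow_iff.mpr ⟨x, hx, h⟩

theorem IsCycle.eq_self_iff_of_mul_eq_mul [Finite α] {c a r l : Perm α} (hc : c.IsCycle)
    {q : α} (hq : c q ≠ q) (hl : l ∈ zpowers c) (hr : r (c q) = c q) (hfac : c * a = r * l) :
    l = c ↔ a q = q := by
  have hlq : l q = r⁻¹ (c (a q)) := by
    rw [eq_inv_mul_of_mul_eq hfac.symm]; rfl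
  have hrq : r⁻¹ (c q) = c q := by rw [inv_eq_iff_eq, hr]
  calc l = c ↔ l q = c q :=
        ⟨fun h => h ▸ rfl, hc.eq_of_mem_zpowers_of_apply_eq hq hl (mem_zpowers c)⟩
    _ ↔ r⁻¹ (c (a q)) = r⁻¹ (c q) := by rw [hlq, hrq]
    _ ↔ a q = q := by simp only [EmbeddingLike.apply_eq_iff_eq]

theorem range_ofSubtype_eq_stabilizer_inf_stabilizer [Fintype α] [DecidableEq α] (a b : α) :
    (ofSubtype : Perm {x // x ∉ ({a, b} : Finset α)} →* Perm α).range =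
      stabilizer (Perm α) a ⊓ stabilizer (Perm α) b := by
  ext g
  rw [mem_range_ofSubtype_iff, mem_inf, mem_stabilizer_iff, mem_stabilizer_iff, Perm.smul_def,
    Perm.smul_def, ← notMem_support, ← notMem_support]
  constructor
  · intro h
    exact ⟨fun ha => h ha (by simp), fun hb => h hb (by simp)⟩
  · rintro ⟨ha, hb⟩ x hx
    simp only [Set.mem_ofPred_eq, Finset.mem_insert, Finset.mem_singleton]
    rintro (rfl | rfl) <;> contradiction

theorem nonempty_stabilizer_inf_stabilizer_mulEquiv [Fintype α] [DecidableEq α] {a b : α}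
    (hab : a ≠ b) {m : ℕ} (hm : Fintype.card α = m + 2) :
    Nonempty ((stabilizer (Perm α) a ⊓ stabilizer (Perm α) b : Subgroup (Perm α)) ≃*
      Perm (Fin m)) := by
  have hcard : Fintype.card {x // x ∉ ({a, b} : Finset α)} = m := by
    rw [Fintype.card_subtype_compl, Fintype.card_coe, Finset.card_pair hab]; omega
  exact ⟨((MulEquiv.subgroupCongr (range_ofSubtype_eq_stabilizer_inf_stabilizer a b)).symm.trans
    (MonoidHom.ofInjective ofSubtype_injective).symm).trans
    (Fintype.equivFinOfCardEq hcard).permCongrHom⟩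

end Equiv.Perm

theorem finRotate_eq_last_of_succ_eq {n : ℕ} {i : Fin (n + 1)} (hi : (i : ℕ) + 1 = n) :
    finRotate (n + 1) i = Fin.last n := by
  ext
  rw [coe_finRotate_of_ne_last (by simp [Fin.ext_iff]; omega), Fin.val_last, hi]

/-- For the factorization S_{n+1} = C_{n+1} · S_n, the stabilizer in S_n of
z = finRotate (n+1) under the action ◁ equals {a ∈ S_n : a(n-1) = n-1}, and
this group is isomorphic to S_{n-1} (i.e. the symmetric group on n-1 letters,
one degree lower). -/
theorem stabilizer_of_cycle (n : ℕ) (hn : 1 ≤ n)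
    (rhd : Subgroup.zpowers (finRotate (n + 1)) →
      MulAction.stabilizer (Equiv.Perm (Fin (n + 1))) (Fin.last n) →
      MulAction.stabilizer (Equiv.Perm (Fin (n + 1))) (Fin.last n))
    (lhd : Subgroup.zpowers (finRotate (n + 1)) →
      MulAction.stabilizer (Equiv.Perm (Fin (n + 1))) (Fin.last n) →
      Subgroup.zpowers (finRotate (n + 1)))
    (hfac : ∀ (x : Subgroup.zpowers (finRotate (n + 1)))
      (a : MulAction.stabilizer (Equiv.Perm (Fin (n + 1))) (Fin.last n)),
      (x : Equiv.Perm (Fin (n + 1))) * (a : Equiv.Perm (Fin (n + 1))) =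
      (rhd x a : Equiv.Perm (Fin (n + 1))) * (lhd x a : Equiv.Perm (Fin (n + 1)))) :
    (∀ a : MulAction.stabilizer (Equiv.Perm (Fin (n + 1))) (Fin.last n),
      lhd ⟨finRotate (n + 1), Subgroup.mem_zpowers _⟩ a =
          ⟨finRotate (n + 1), Subgroup.mem_zpowers _⟩ ↔
        (a : Equiv.Perm (Fin (n + 1))) ⟨n - 1, by omega⟩ = ⟨n - 1, by omega⟩) ∧
    Nonempty ((MulAction.stabilizer (Equiv.Perm (Fin (n + 1))) (Fin.last n) ⊓
        MulAction.stabilizer (Equiv.Perm (Fin (n + 1))) (⟨n - 1, by omega⟩ : Fin (n + 1)) :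
        Subgroup (Equiv.Perm (Fin (n + 1)))) ≃* Equiv.Perm (Fin (n - 1))) := by
  have hz : finRotate (n + 1) ⟨n - 1, by omega⟩ = Fin.last n :=
    finRotate_eq_last_of_succ_eq (by simp; omega)
  have hne : Fin.last n ≠ ⟨n - 1, by omega⟩ := by simp [Fin.ext_iff]; omega
  refine ⟨fun a => ?_,
    Equiv.Perm.nonempty_stabilizer_inf_stabilizer_mulEquiv hne (by simp; omega)⟩
  let z : Subgroup.zpowers (finRotate (n + 1)) := ⟨finRotate (n + 1), Subgroup.mem_zpowers _⟩
  rw [Subtype.ext_iff]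
  refine (isCycle_finRotate_of_le (by omega)).eq_self_iff_of_mul_eq_mul ?_ (lhd z a).2 ?_
    (hfac z a)
  · rw [hz]; exact hne
  · rw [hz]; exact (rhd z a).2
end

section
/- Consider the factorization S_n = S_{n-1} · C_n with induced actions (for x ∈ S_{n-1}, a = (1,2,...,n) generating C_n, write x·a^i = (x ▷ a^i)(x ◁ a^i) with x ▷ a^i ∈ C_n, x ◁ a^i ∈ S_{n-1}). Then the fixed subgroup (S_{n-1})^{C_n} = {x ∈ S_{n-1} : x ◁ a^i = x for all i} is isomorphic to the group of units (ℤ/nℤ)^*; in particular it has φ(n) elements. -/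
/-!
The stabilizer `S` of the last point meets `C = ⟨a⟩` trivially, so `x ◁ c = x` holds exactly
when `x c x⁻¹ ∈ C`: the fixed points of `◁` are the elements of `S` normalizing `C`. Reading
`Fin (n + 1)` as `ZMod (n + 1)` (definitionally the same type), `a` is `i ↦ i + 1`, and
`x a x⁻¹ = a ^ m` says `x (i + 1) = x i + m`. Hence `x` is affine, surjectivity makes `m` a
unit, and fixing the point `p` forces `x` to be the homothety `i ↦ m (i - p) + p`. Units and
these homotheties correspond by an injective homomorphism.
-/

open Equiv MulAction Subgroup Function

section Factorization

variable {G : Type*} [Group G]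

theorem eq_iff_conj_mem_of_mul_eq_mul {H C : Subgroup G} (hHC : Disjoint H C) {x c r l : G}
    (hx : x ∈ H) (hr : r ∈ C) (hl : l ∈ H) (h : x * c = r * l) :
    l = x ↔ x * c * x⁻¹ ∈ C := by
  constructor
  · rintro rfl
    rwa [h, mul_inv_cancel_right]
  · intro hconj
    have hC : l * x⁻¹ ∈ C := by
      have hlx : l * x⁻¹ = r⁻¹ * (x * c * x⁻¹) := by rw [h]; group
      exact hlx ▸ mul_mem (inv_mem hr) hconj
    exact mul_inv_eq_one.mp (disjoint_def.mp hHC (mul_mem hl (inv_mem hx)) hC)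

theorem forall_conj_mem_zpowers_iff {g x : G} :
    (∀ c ∈ zpowers g, x * c * x⁻¹ ∈ zpowers g) ↔ x * g * x⁻¹ ∈ zpowers g := by
  refine ⟨fun h => h g (mem_zpowers g), fun h c hc => ?_⟩
  obtain ⟨k, rfl⟩ := mem_zpowers_iff.mp hc
  rw [← conj_zpow]
  exact zpow_mem h k

theorem forall_eq_iff_conj_mem_zpowers {H : Subgroup G} {g : G} (hHg : Disjoint H (zpowers g))
    (rhd : H → zpowers g → zpowers g) (lhd : H → zpowers g → H)
    (hfac : ∀ (x : H) (c : zpowers g), (x : G) * c = rhd x c * lhd x c) (x : H) :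
    (∀ c, lhd x c = x) ↔ (x : G) * g * (x : G)⁻¹ ∈ zpowers g := by
  rw [← forall_conj_mem_zpowers_iff, Subtype.forall]
  refine forall₂_congr fun c hc => ?_
  rw [← Subtype.coe_inj]
  exact eq_iff_conj_mem_of_mul_eq_mul hHg x.2 (rhd x _).2 (lhd x _).2 (hfac x ⟨c, hc⟩)

end Factorization

theorem exists_equiv_mul_of_forall_iff_mem_range {K M : Type*} [MulOneClass K] [MulOneClass M]
    (f : K →* M) (hf : Injective f) {P : M → Prop} (hP : ∀ x, P x ↔ x ∈ Set.range f) :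
    ∃ e : {x // P x} ≃ K, ∀ x y z : {x // P x}, (x : M) * y = z → e x * e y = e z := by
  let e : {x // P x} ≃ K :=
    ((Equiv.ofInjective f hf).trans (Equiv.subtypeEquivRight fun x => (hP x).symm)).symm
  have he : ∀ x, f (e x) = x := fun x => by
    simp [e, Equiv.apply_ofInjective_symm]
  refine ⟨e, fun x y z hxyz => hf ?_⟩
  rw [map_mul, he, he, he, hxyz]

theorem Equiv.addRight_zpow {A : Type*} [AddGroup A] (a : A) (k : ℤ) :
    Equiv.addRight a ^ k = Equiv.addRight (k • a) := by
  induction k using Int.induction_on with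
  | zero => simp
  | succ k ih => ext x; simp [zpow_add_one, ih, add_zsmul, add_assoc, nsmul_add_comm']
  | pred k ih =>
    ext x
    simp [zpow_sub_one, ih, sub_zsmul, add_assoc, ← neg_add_rev, nsmul_add_comm']

section Homothety

variable {R : Type*} [CommRing R]

def homothetyPerm (p : R) : Rˣ →* Perm R :=
  (MulAut.conj (Equiv.addRight p)).toMonoidHom.comp (MulAction.toPermHom Rˣ R)

@[simp]
theorem homothetyPerm_apply (p : R) (u : Rˣ) (i : R) : homothetyPerm p u i = u * (i - p) + p := by
  simp [homothetyPerm, sub_eq_add_neg, Units.smul_def, mul_add]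

theorem homothetyPerm_apply_self (p : R) (u : Rˣ) : homothetyPerm p u p = p := by simp

theorem homothetyPerm_injective (p : R) : Injective (homothetyPerm p) := by
  intro u v h
  ext
  simpa using congrArg (· (p + 1)) h

theorem homothetyPerm_conj_addRight (p a : R) (u : Rˣ) :
    homothetyPerm p u * Equiv.addRight a * (homothetyPerm p u)⁻¹ = Equiv.addRight (u * a) := by
  rw [mul_inv_eq_iff_eq_mul]
  ext i
  simp only [Perm.mul_apply, homothetyPerm_apply, Equiv.coe_addRight]
  ring

end Homothety

namespace ZMod

variable {N : ℕ}

theorem mem_zpowers_addRight_one_iff {c : Perm (ZMod N)} :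
    c ∈ zpowers (Equiv.addRight 1) ↔ ∃ m, Equiv.addRight m = c := by
  simp only [mem_zpowers_iff, Equiv.addRight_zpow, zsmul_one]
  exact ⟨fun ⟨k, hk⟩ => ⟨k, hk⟩,
    fun ⟨m, hm⟩ => ⟨m.cast, by rwa [intCast_zmod_cast]⟩⟩

theorem disjoint_stabilizer_zpowers_addRight_one (p : ZMod N) :
    Disjoint (stabilizer (Perm (ZMod N)) p) (zpowers (Equiv.addRight 1)) := by
  refine disjoint_def.mpr fun {c} hp hc => ?_
  obtain ⟨m, rfl⟩ := mem_zpowers_addRight_one_iff.mp hc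
  have hm : p + m = p := hp
  rw [add_eq_left.mp hm, Equiv.addRight_zero]

variable [NeZero N]

theorem apply_eq_add_mul_of_apply_add_one {f : ZMod N → ZMod N} {m : ZMod N}
    (hf : ∀ i, f (i + 1) = f i + m) (i : ZMod N) : f i = f 0 + i * m := by
  have hnat : ∀ k : ℕ, f k = f 0 + k * m := by
    intro k
    induction k with
    | zero => simp
    | succ k ih => rw [Nat.cast_succ, hf, ih]; ring
  simpa only [natCast_zmod_val] using hnat i.val

theorem exists_homothetyPerm_eq {p : ZMod N} {x : Perm (ZMod N)} (hp : x p = p)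
    (hx : x * Equiv.addRight 1 * x⁻¹ ∈ zpowers (Equiv.addRight 1)) :
    ∃ u, homothetyPerm p u = x := by
  obtain ⟨m, hm⟩ := mem_zpowers_addRight_one_iff.mp hx
  rw [eq_mul_inv_iff_mul_eq] at hm
  have hstep : ∀ i, x (i + 1) = x i + m := fun i => (congrArg (· i) hm).symm
  have hx_affine : ∀ i, x i = m * (i - p) + p := by
    intro i
    have hxp := apply_eq_add_mul_of_apply_add_one hstep p
    rw [apply_eq_add_mul_of_apply_add_one hstep i]
    linear_combination hp - hxp
  obtain ⟨j, hj⟩ := x.surjective (p + 1)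
  have hm_unit : IsUnit m :=
    IsUnit.of_mul_eq_one (j - p) (by linear_combination (hx_affine j).symm.trans hj)
  exact ⟨hm_unit.unit, Equiv.ext fun i => by simp [hx_affine]⟩

theorem mem_range_homothetyPerm_iff {p : ZMod N} {x : Perm (ZMod N)} :
    x ∈ Set.range (homothetyPerm p) ↔
      x p = p ∧ x * Equiv.addRight 1 * x⁻¹ ∈ zpowers (Equiv.addRight 1) := by
  refine ⟨?_, fun ⟨hp, hx⟩ => exists_homothetyPerm_eq hp hx⟩
  rintro ⟨u, rfl⟩
  rw [homothetyPerm_conj_addRight]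
  exact ⟨homothetyPerm_apply_self p u, mem_zpowers_addRight_one_iff.mpr ⟨_, rfl⟩⟩

end ZMod

theorem finRotate_succ_eq_addRight_one (n : ℕ) :
    finRotate (n + 1) = (Equiv.addRight 1 : Perm (ZMod (n + 1))) := by
  ext i
  rw [finRotate_apply]
  rfl

/-- For the factorization S_{n+1} = S_n · C_{n+1} (S_n the stabilizer of the
last point, C_{n+1} = ⟨finRotate (n+1)⟩), with actions defined by
x·c = (x ▷ c)·(x ◁ c), x ▷ c ∈ C_{n+1}, x ◁ c ∈ S_n, the fixed subgroup
(S_n)^{C_{n+1}} = {x : x ◁ c = x for all c} is isomorphic (as a group) to the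
group of units (ℤ/(n+1)ℤ)ˣ; in particular it has φ(n+1) elements. -/
theorem fixed_subgroup_iso_units (n : ℕ)
    (rhd : MulAction.stabilizer (Equiv.Perm (Fin (n + 1))) (Fin.last n) →
      Subgroup.zpowers (finRotate (n + 1)) →
      Subgroup.zpowers (finRotate (n + 1)))
    (lhd : MulAction.stabilizer (Equiv.Perm (Fin (n + 1))) (Fin.last n) →
      Subgroup.zpowers (finRotate (n + 1)) →
      MulAction.stabilizer (Equiv.Perm (Fin (n + 1))) (Fin.last n))
    (hfac : ∀ (x : MulAction.stabilizer (Equiv.Perm (Fin (n + 1))) (Fin.last n))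
      (c : Subgroup.zpowers (finRotate (n + 1))),
      (x : Equiv.Perm (Fin (n + 1))) * (c : Equiv.Perm (Fin (n + 1))) =
      (rhd x c : Equiv.Perm (Fin (n + 1))) * (lhd x c : Equiv.Perm (Fin (n + 1)))) :
    (∃ e : {x : MulAction.stabilizer (Equiv.Perm (Fin (n + 1))) (Fin.last n) //
        ∀ c, lhd x c = x} ≃ (ZMod (n + 1))ˣ,
      ∀ x y z : {x : MulAction.stabilizer (Equiv.Perm (Fin (n + 1))) (Fin.last n) //
        ∀ c, lhd x c = x}, (x : MulAction.stabilizer (Equiv.Perm (Fin (n + 1))) (Fin.last n)) *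
          (y : MulAction.stabilizer (Equiv.Perm (Fin (n + 1))) (Fin.last n)) = z →
        e x * e y = e z) ∧
    Nat.card {x : MulAction.stabilizer (Equiv.Perm (Fin (n + 1))) (Fin.last n) //
      ∀ c, lhd x c = x} = Nat.totient (n + 1) := by
  have hdisj : Disjoint (stabilizer (Perm (Fin (n + 1))) (Fin.last n))
      (zpowers (finRotate (n + 1))) := by
    rw [finRotate_succ_eq_addRight_one]
    exact ZMod.disjoint_stabilizer_zpowers_addRight_one (N := n + 1) (Fin.last n)
  let f : (ZMod (n + 1))ˣ →* stabilizer (Perm (Fin (n + 1))) (Fin.last n) :=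
    (homothetyPerm (R := ZMod (n + 1)) (Fin.last n)).codRestrict _ (homothetyPerm_apply_self _)
  have hf : Injective f := fun u v huv =>
    homothetyPerm_injective _ (congrArg Subtype.val huv)
  have hfixed : ∀ x, (∀ c, lhd x c = x) ↔ x ∈ Set.range f := by
    intro x
    rw [forall_eq_iff_conj_mem_zpowers hdisj rhd lhd hfac, finRotate_succ_eq_addRight_one]
    have hrange : x ∈ Set.range f ↔ (x : Perm (Fin (n + 1))) ∈
        Set.range (homothetyPerm (R := ZMod (n + 1)) (Fin.last n)) := by
      simp only [Set.mem_range, Subtype.ext_iff, f]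
      rfl
    rw [hrange]
    exact (ZMod.mem_range_homothetyPerm_iff.trans
      (and_iff_right (mem_stabilizer_iff.mp x.2))).symm
  obtain ⟨e, he⟩ := exists_equiv_mul_of_forall_iff_mem_range f hf hfixed
  refine ⟨⟨e, he⟩, ?_⟩
  rw [Nat.card_congr e, Nat.card_eq_fintype_card, ZMod.card_units_eq_totient]
end
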